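/- For n ≤ 3 voters, every instance (c,k) is integralizable: every integer utility vector that is fractional-committee-feasible is also integral-committee-feasible. -/

import Mathlib

/-- Candidate types: non-empty subsets of the voter set `Fin n`. -/
abbrev Typ (n : ℕ) := {S : Finset (Fin n) // S.Nonempty}

/-- Utility of voter `i` under an integral committee `x`. -/
def intUtil {n : ℕ} (x : Typ n → ℕ) (i : Fin n) : ℤ :=
  ∑ R : Typ n, if i ∈ R.1 then (x R : ℤ) else 0

/-- Utility of voter `i` under a fractional committee `x`. -/
def fracUtil {n : ℕ} (x : Typ n → ℝ) (i : Fin n) : ℝ :=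
  ∑ R : Typ n, if i ∈ R.1 then x R else 0

/-- `x` is an integral committee for the instance `(c, k)`. -/
def IsIntCommittee {n : ℕ} (c : Typ n → ℕ) (k : ℕ) (x : Typ n → ℕ) : Prop :=
  (∀ R, x R ≤ c R) ∧ (∑ R : Typ n, x R) ≤ k

/-- `x` is a fractional committee for the instance `(c, k)`. -/
def IsFracCommittee {n : ℕ} (c : Typ n → ℕ) (k : ℕ) (x : Typ n → ℝ) : Prop :=
  (∀ R, 0 ≤ x R) ∧ (∀ R, x R ≤ (c R : ℝ)) ∧ (∑ R : Typ n, x R) ≤ (k : ℝ)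

/-- `u` is integral-committee-feasible in `(c, k)`. -/
def IntFeasible {n : ℕ} (c : Typ n → ℕ) (k : ℕ) (u : Fin n → ℤ) : Prop :=
  ∃ x : Typ n → ℕ, IsIntCommittee c k x ∧ ∀ i, u i ≤ intUtil x i

/-- `u` is fractional-committee-feasible in `(c, k)`. -/
def FracFeasible {n : ℕ} (c : Typ n → ℕ) (k : ℕ) (u : Fin n → ℤ) : Prop :=
  ∃ x : Typ n → ℝ, IsFracCommittee c k x ∧ ∀ i, (u i : ℝ) ≤ fracUtil x i

/-- `(c, k)` is integralizable. -/
def Integralizable {n : ℕ} (c : Typ n → ℕ) (k : ℕ) : Prop :=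
  ∀ u : Fin n → ℤ, FracFeasible c k u → IntFeasible c k u

/-!
Every inequality of `Typ3.Hall` is a weak LP-duality bound, so it holds for fractionally feasible
demands. Conversely, for three voters these inequalities always allow buying one candidate while
keeping them valid for the residual demands, capacities and budget; iterating this greedy step
builds an integral committee. Fewer voters embed into three voters, the new types getting capacity
zero and the new voters demand zero.
-/

open Finset Function

theorem fracUtil_nonneg {n : ℕ} {x : Typ n → ℝ} (hx : ∀ R, 0 ≤ x R) (i : Fin n) :
    0 ≤ fracUtil x i :=
  sum_nonneg fun R _ => by split_ifs <;> simp [hx R]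

theorem intUtil_add_single {n : ℕ} (x : Typ n → ℕ) (R : Typ n) (i : Fin n) :
    intUtil (x + Pi.single R 1) i = intUtil x i + if i ∈ R.1 then 1 else 0 := by
  simp only [intUtil, Pi.add_apply, Nat.cast_add, ite_add_zero, sum_add_distrib]
  congr 1
  rw [sum_eq_single R (fun R' _ hR' => by simp [hR']) (by simp)]
  simp

theorem intFeasible_of_nonpos {n : ℕ} (c : Typ n → ℕ) (k : ℕ) {u : Fin n → ℤ}
    (hu : ∀ i, u i ≤ 0) : IntFeasible c k u :=
  ⟨0, ⟨fun _ => Nat.zero_le _, by simp⟩, fun i => by simpa [intUtil] using hu i⟩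

theorem intFeasible_of_pick {n : ℕ} {c : Typ n → ℕ} {k : ℕ} {u : Fin n → ℤ} {R : Typ n}
    (hcR : 1 ≤ c R)
    (h : IntFeasible (update c R (c R - 1)) k (fun i => u i - if i ∈ R.1 then 1 else 0)) :
    IntFeasible c (k + 1) u := by
  obtain ⟨x, ⟨hxc, hxk⟩, hxu⟩ := h
  refine ⟨x + Pi.single R 1, ⟨fun R' => ?_, ?_⟩, fun i => ?_⟩
  · have := hxc R'
    by_cases hR' : R' = R
    · subst hR'
      simp only [update_self, Pi.add_apply, Pi.single_eq_same] at this ⊢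
      omega
    · simpa [hR'] using this
  · simpa [sum_add_distrib] using hxk
  · have := hxu i
    dsimp only at this
    rw [intUtil_add_single]
    omega

theorem intFeasible_of_invariant {n : ℕ} (Q : (Fin n → ℤ) → (Typ n → ℕ) → ℕ → Prop)
    (hQ : ∀ u c k, Q u c k → (∃ i, 0 < u i) → ∃ R, 1 ≤ c R ∧ 1 ≤ k ∧
      Q (fun i => u i - if i ∈ R.1 then 1 else 0) (update c R (c R - 1)) (k - 1))
    {u : Fin n → ℤ} {c : Typ n → ℕ} {k : ℕ} (h : Q u c k) : IntFeasible c k u := by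
  induction k generalizing u c with
  | zero =>
    refine intFeasible_of_nonpos c 0 fun i => ?_
    by_contra! hi
    obtain ⟨R, -, hk, -⟩ := hQ u c 0 h ⟨i, hi⟩
    omega
  | succ k ih =>
    by_cases hpos : ∃ i, 0 < u i
    · obtain ⟨R, hcR, -, hR⟩ := hQ u c (k + 1) h hpos
      exact intFeasible_of_pick hcR (ih hR)
    · simp only [not_exists, not_lt] at hpos
      exact intFeasible_of_nonpos c (k + 1) hpos

namespace Typ

variable {n m : ℕ} (h : n ≤ m)

def castLE (S : Typ n) : Typ m := ⟨S.1.map (Fin.castLEEmb h), S.2.map⟩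

theorem castLE_injective : Injective (castLE h) := fun _ _ hST =>
  Subtype.ext (map_injective _ (congrArg Subtype.val hST))

theorem sum_ite_mem_castLE {M : Type*} [AddCommMonoid M] (g : Typ m → M)
    (hg : ∀ R ∉ Set.range (castLE h), g R = 0) (i : Fin n) :
    ∑ R, (if Fin.castLE h i ∈ R.1 then g R else 0) =
      ∑ S, if i ∈ S.1 then g (castLE h S) else 0 := by
  refine (Fintype.sum_of_injective _ (castLE_injective h) _ _ (fun R hR => ?_) fun S => ?_).symm
  · simp [hg R hR]
  · simp [castLE]

end Typ

section castLE

variable {n m : ℕ} (h : n ≤ m) {c : Typ n → ℕ} {k : ℕ} {u : Fin n → ℤ}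

theorem fracFeasible_extend_castLE (hu : FracFeasible c k u) :
    FracFeasible (extend (Typ.castLE h) c 0) k (extend (Fin.castLE h) u 0) := by
  obtain ⟨x, ⟨hx0, hxc, hxk⟩, hxu⟩ := hu
  have he := Typ.castLE_injective h
  have hx0' : 0 ≤ extend (Typ.castLE h) x 0 := extend_nonneg (fun R => hx0 R) le_rfl
  have hx : ∀ R ∉ Set.range (Typ.castLE h), extend (Typ.castLE h) x 0 R = 0 :=
    fun R hR => extend_apply' _ _ _ hR
  refine ⟨extend (Typ.castLE h) x 0, ⟨hx0', fun R => ?_, ?_⟩, fun j => ?_⟩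
  · by_cases hR : ∃ S, Typ.castLE h S = R
    · obtain ⟨S, rfl⟩ := hR
      simpa [he.extend_apply] using hxc S
    · simp [extend_apply' _ _ _ hR]
  · rwa [← Fintype.sum_of_injective _ he x _ hx fun S => (he.extend_apply x 0 S).symm]
  · by_cases hj : ∃ i, Fin.castLE h i = j
    · obtain ⟨i, rfl⟩ := hj
      rw [(Fin.castLE_injective h).extend_apply, fracUtil,
        Typ.sum_ite_mem_castLE h _ hx]
      simpa [he.extend_apply, fracUtil] using hxu i
    · rw [extend_apply' _ _ _ hj, Pi.zero_apply, Int.cast_zero]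
      exact fracUtil_nonneg hx0' j

theorem intFeasible_of_extend_castLE
    (hu : IntFeasible (extend (Typ.castLE h) c 0) k (extend (Fin.castLE h) u 0)) :
    IntFeasible c k u := by
  obtain ⟨y, ⟨hyc, hyk⟩, hyu⟩ := hu
  have he := Typ.castLE_injective h
  have hy : ∀ R ∉ Set.range (Typ.castLE h), y R = 0 := fun R hR => by
    simpa [extend_apply' _ _ _ hR] using hyc R
  refine ⟨y ∘ Typ.castLE h, ⟨fun S => by simpa [he.extend_apply] using hyc (Typ.castLE h S), ?_⟩,
    fun i => ?_⟩
  · exact (Fintype.sum_of_injective _ he _ y hy fun _ => rfl).trans_le hyk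
  · have := hyu (Fin.castLE h i)
    rwa [(Fin.castLE_injective h).extend_apply, intUtil,
      Typ.sum_ite_mem_castLE h (fun R => (y R : ℤ)) fun R hR => by simp [hy R hR]] at this

end castLE

theorem integralizable_of_le {n m : ℕ} (h : n ≤ m)
    (hm : ∀ (c : Typ m → ℕ) (k : ℕ), Integralizable c k) (c : Typ n → ℕ) (k : ℕ) :
    Integralizable c k := fun _ hu =>
  intFeasible_of_extend_castLE h (hm _ _ _ (fracFeasible_extend_castLE h hu))

namespace Typ3

def t0 : Typ 3 := ⟨{0}, by decide⟩
def t1 : Typ 3 := ⟨{1}, by decide⟩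
def t2 : Typ 3 := ⟨{2}, by decide⟩
def t01 : Typ 3 := ⟨{0, 1}, by decide⟩
def t02 : Typ 3 := ⟨{0, 2}, by decide⟩
def t12 : Typ 3 := ⟨{1, 2}, by decide⟩
def t012 : Typ 3 := ⟨{0, 1, 2}, by decide⟩

theorem sum_eq {M : Type*} [AddCommMonoid M] (f : Typ 3 → M) :
    ∑ R, f R = f t0 + f t1 + f t2 + f t01 + f t02 + f t12 + f t012 := by
  have : (univ : Finset (Typ 3)) = {t0, t1, t2, t01, t02, t12, t012} := by decide
  simp +decide [this, add_assoc]

theorem fracUtil_zero (x : Typ 3 → ℝ) : fracUtil x 0 = x t0 + x t01 + x t02 + x t012 := by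
  simp [fracUtil, sum_eq, t0, t1, t2, t01, t02, t12, t012]

theorem fracUtil_one (x : Typ 3 → ℝ) : fracUtil x 1 = x t1 + x t01 + x t12 + x t012 := by
  simp [fracUtil, sum_eq, t0, t1, t2, t01, t02, t12, t012]

theorem fracUtil_two (x : Typ 3 → ℝ) : fracUtil x 2 = x t2 + x t02 + x t12 + x t012 := by
  simp [fracUtil, sum_eq, t0, t1, t2, t01, t02, t12, t012]

/-- For a set `S` of voters and `l : ℕ`, a fractional committee gives
`∑ i ∈ S, u i ≤ l * k + ∑ R, c R * (#(R ∩ S) - l)` (truncated subtraction); these are the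
instances that matter for three voters. -/
def Hall (u : Fin 3 → ℤ) (c : Typ 3 → ℕ) (k : ℕ) : Prop :=
  u 0 ≤ k ∧ u 1 ≤ k ∧ u 2 ≤ k ∧
  u 0 ≤ ↑(c t0 + c t01 + c t02 + c t012) ∧
  u 1 ≤ ↑(c t1 + c t01 + c t12 + c t012) ∧
  u 2 ≤ ↑(c t2 + c t02 + c t12 + c t012) ∧
  u 0 + u 1 ≤ ↑(k + c t01 + c t012) ∧
  u 0 + u 2 ≤ ↑(k + c t02 + c t012) ∧
  u 1 + u 2 ≤ ↑(k + c t12 + c t012) ∧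
  u 0 + u 1 + u 2 ≤ ↑(k + c t01 + c t02 + c t12 + 2 * c t012) ∧
  u 0 + u 1 + u 2 ≤ ↑(2 * k + c t012)

theorem hall_of_fracFeasible {c : Typ 3 → ℕ} {k : ℕ} {u : Fin 3 → ℤ}
    (hu : FracFeasible c k u) : Hall u c k := by
  obtain ⟨x, ⟨hx0, hxc, hxk⟩, hxu⟩ := hu
  have h0 := (hxu 0).trans_eq (fracUtil_zero x)
  have h1 := (hxu 1).trans_eq (fracUtil_one x)
  have h2 := (hxu 2).trans_eq (fracUtil_two x)
  rw [sum_eq] at hxk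
  refine ⟨?_, ?_, ?_, ?_, ?_, ?_, ?_, ?_, ?_, ?_, ?_⟩ <;> rify <;>
    linarith [hx0 t0, hx0 t1, hx0 t2, hx0 t01, hx0 t02, hx0 t12, hx0 t012,
      hxc t0, hxc t1, hxc t2, hxc t01, hxc t02, hxc t12, hxc t012]

theorem Hall.pick {u : Fin 3 → ℤ} {c : Typ 3 → ℕ} {k : ℕ} (h : Hall u c k)
    (hpos : ∃ i, 0 < u i) : ∃ R, 1 ≤ c R ∧ 1 ≤ k ∧
      Hall (fun i => u i - if i ∈ R.1 then 1 else 0) (update c R (c R - 1)) (k - 1) := by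
  have hu : 0 < u 0 ∨ 0 < u 1 ∨ 0 < u 2 := by
    obtain ⟨i, hi⟩ := hpos
    fin_cases i <;> simp at hi <;> omega
  unfold Hall at h
  -- A voter with `u i = k` has to be served by every candidate bought from now on.
  by_cases h012 : 1 ≤ c t012
  · exact ⟨t012, h012, by omega, by simp +decide [Hall]; omega⟩
  by_cases h01 : 1 ≤ c t01 ∧ u 2 < k
  · exact ⟨t01, h01.1, by omega, by simp +decide [Hall]; omega⟩
  by_cases h02 : 1 ≤ c t02 ∧ u 1 < k
  · exact ⟨t02, h02.1, by omega, by simp +decide [Hall]; omega⟩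
  by_cases h12 : 1 ≤ c t12 ∧ u 0 < k
  · exact ⟨t12, h12.1, by omega, by simp +decide [Hall]; omega⟩
  by_cases h0 : 0 < u 0 ∧ c t01 = 0 ∧ c t02 = 0
  · exact ⟨t0, by omega, by omega, by simp +decide [Hall]; omega⟩
  by_cases h1 : 0 < u 1 ∧ c t01 = 0 ∧ c t12 = 0
  · exact ⟨t1, by omega, by omega, by simp +decide [Hall]; omega⟩
  exact ⟨t2, by omega, by omega, by simp +decide [Hall]; omega⟩

theorem integralizable (c : Typ 3 → ℕ) (k : ℕ) : Integralizable c k := fun _ hu =>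
  intFeasible_of_invariant Hall (fun _ _ _ => Hall.pick) (hall_of_fracFeasible hu)

end Typ3

theorem stmt11 (n : ℕ) (hn : n ≤ 3) (c : Typ n → ℕ) (k : ℕ) :
    Integralizable c k :=
  integralizable_of_le hn Typ3.integralizable c k
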